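/- Let G be any group. Then Inn(G) is finite if and only if IA(G)* is finite. -/

import Mathlib

/-- The group of inner automorphisms of `G`. -/
def Inn (G : Type*) [Group G] : Subgroup (MulAut G) :=
  (MulAut.conj : G →* MulAut G).range

/-- The group of IA-automorphisms of `G` fixing the center elementwise. -/
def IAstar (G : Type*) [Group G] : Subgroup (MulAut G) where
  carrier := {α | (∀ g : G, g⁻¹ * α g ∈ commutator G) ∧ ∀ z ∈ Subgroup.center G, α z = z}
  one_mem' := by
    constructor
    · intro g; simp
    · intro z _; rfl
  mul_mem' := by
    rintro α β ⟨hα, hα'⟩ ⟨hβ, hβ'⟩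
    constructor
    · intro g
      have h : g⁻¹ * (α * β) g = (g⁻¹ * β g) * ((β g)⁻¹ * α (β g)) := by
        simp [MulAut.mul_apply, mul_assoc]
      rw [h]
      exact mul_mem (hβ g) (hα (β g))
    · intro z hz
      simp [MulAut.mul_apply, hβ' z hz, hα' z hz]
  inv_mem' := by
    rintro α ⟨hα, hα'⟩
    constructor
    · intro g
      have h := hα (α⁻¹ g)
      rw [MulAut.apply_inv_self] at h
      simpa using inv_mem h
    · intro z hz
      have h := congrArg (fun x => α⁻¹ x) (hα' z hz)
      simp only [MulAut.inv_apply_self] at h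
      exact h.symm

/-!
`Inn G ≅ G/Z(G)` and `Inn G ≤ IA(G)*`, which gives one direction. Conversely, if `Z(G)` has finite
index then commutators `⁅g, h⁆` depend only on the cosets `gZ(G)`, `hZ(G)`, so there are finitely
many of them, and by Schur's theorem `G'` is finite. An automorphism `α ∈ IA(G)*` satisfies
`α (r z) = α r * z` for central `z`, so it is determined by the finitely many elements
`r⁻¹ * α r ∈ G'` with `r` running over a transversal of `Z(G)`.
-/

open scoped commutatorElement

open Subgroup QuotientGroup

section

variable {G : Type*} [Group G]

lemma MulAut.ker_conj : (MulAut.conj : G →* MulAut G).ker = center G := by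
  ext x
  simp only [MonoidHom.mem_ker, MulEquiv.ext_iff, MulAut.conj_apply, MulAut.one_apply,
    mul_inv_eq_iff_eq_mul, mem_center_iff]
  exact forall_congr' fun _ => eq_comm

lemma commutatorElement_mul_center_left {z : G} (hz : z ∈ center G) (g h : G) :
    ⁅g * z, h⁆ = ⁅g, h⁆ := by
  rw [commutatorElement_def, commutatorElement_def, mul_inv_rev,
    show g * z * h * (z⁻¹ * g⁻¹) = g * (z * h * z⁻¹) * g⁻¹ by group,
    (mem_center_iff.mp hz h).symm, mul_inv_cancel_right]

lemma commutatorElement_mul_center_right {w : G} (hw : w ∈ center G) (g h : G) :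
    ⁅g, h * w⁆ = ⁅g, h⁆ := by
  rw [← commutatorElement_inv, commutatorElement_mul_center_left hw, commutatorElement_inv]

lemma finite_commutatorSet_of_finite_quotient_center [Finite (G ⧸ center G)] :
    Finite (commutatorSet G) := by
  have hsub : commutatorSet G ⊆
      Set.range fun p : (G ⧸ center G) × (G ⧸ center G) => ⁅p.1.out, p.2.out⁆ := by
    rintro _ ⟨g, h, rfl⟩
    obtain ⟨z, hz⟩ := mk_out_eq_mul (center G) g
    obtain ⟨w, hw⟩ := mk_out_eq_mul (center G) h
    refine ⟨(g, h), ?_⟩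
    simp only [hz, hw, commutatorElement_mul_center_left z.2,
      commutatorElement_mul_center_right w.2]
  exact (Set.finite_range _).subset hsub

noncomputable def innMulEquivQuotientCenter : Inn G ≃* G ⧸ center G :=
  (quotientKerEquivRange MulAut.conj).symm.trans (quotientMulEquivOfEq MulAut.ker_conj)

lemma inn_le_IAstar : Inn G ≤ IAstar G := by
  rintro _ ⟨g, rfl⟩
  refine ⟨fun h => ?_, fun z hz => ?_⟩
  · rw [MulAut.conj_apply, show h⁻¹ * (g * h * g⁻¹) = ⁅h⁻¹, g⁆ by group]
    exact commutator_mem_commutator (mem_top _) (mem_top _)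
  · rw [MulAut.conj_apply, mem_center_iff.mp hz g, mul_inv_cancel_right]

namespace IAstar

lemma apply_mul_of_mem_center {α : MulAut G} (hα : α ∈ IAstar G) (g : G) {z : G}
    (hz : z ∈ center G) : α (g * z) = α g * z := by
  rw [map_mul, hα.2 z hz]

lemma ext_of_apply_out {α β : MulAut G} (hα : α ∈ IAstar G) (hβ : β ∈ IAstar G)
    (h : ∀ q : G ⧸ center G, α q.out = β q.out) : α = β := by
  ext g
  obtain ⟨z, hz⟩ := mk_out_eq_mul (center G) g
  have hg : g = (g : G ⧸ center G).out * (z : G)⁻¹ := by rw [hz, mul_inv_cancel_right]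
  rw [hg, apply_mul_of_mem_center hα _ (inv_mem z.2), apply_mul_of_mem_center hβ _ (inv_mem z.2),
    h]

end IAstar

lemma finite_IAstar_of_finite_quotient_center [Finite (G ⧸ center G)] : Finite (IAstar G) := by
  -- Schur's theorem, the instance `Finite (commutator G)`, fires from this.
  have := finite_commutatorSet_of_finite_quotient_center (G := G)
  let f : IAstar G → G ⧸ center G → commutator G :=
    fun α q => ⟨q.out⁻¹ * (α : MulAut G) q.out, α.2.1 q.out⟩
  refine Finite.of_injective f fun α β hαβ => Subtype.ext ?_
  refine IAstar.ext_of_apply_out α.2 β.2 fun q => ?_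
  simpa [f] using congrArg Subtype.val (congrFun hαβ q)

end

/-- For any group `G`, `Inn(G)` is finite iff `IA(G)*` is finite. -/
theorem inn_finite_iff_IAstar_finite (G : Type*) [Group G] :
    Finite (Inn G) ↔ Finite (IAstar G) := by
  refine ⟨fun _ => ?_, fun _ => Finite.of_injective _ (inclusion_injective inn_le_IAstar)⟩
  have : Finite (G ⧸ center G) := Finite.of_equiv _ innMulEquivQuotientCenter.toEquiv
  exact finite_IAstar_of_finite_quotient_center
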